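/- Let (Z,d,ν) be an Ahlfors D-regular metric measure space with constant c ≥ 1, and let s ∈ (0,1) and p ≥ 1. Then there is a constant C > 0, depending only on c, D and the product s·p, such that for every measurable set E ⊆ Z with ν(E) < ∞ and every ξ ∈ Z one has ∫_{Z∖E} d(ξ,η)^{−(D+s·p)} dν(η) ≥ C · ν(E)^{−s·p/D} − ν(Z)^{−s·p/D}, with the convention that both sides are interpreted in the extended reals (and ν(Z)^{−s·p/D} = 0 when ν(Z) = ∞). -/

import Mathlib

open MeasureTheory Metric Filter
open scoped ENNReal NNReal Topology

/-!
Write `κ = -sp/D`. If `ν E = 0`, the integral dominates `ρ^{-(D+sp)} ν(B(ξ,ρ)) ≥ c⁻¹ ρ^{-sp}`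
for every radius `ρ` below the diameter, which is positive since `Z` has no isolated points;
so the integral is infinite. Otherwise choose `r` with `c⁻¹ r^D = 2 ν(E)`. Either the closed
ball `B̄(ξ,r)` has measure `≥ 2 ν(E)`, so `B̄(ξ,r) \ E` has measure `≥ ν(E)` and carries an
integrand `≥ r^{-(D+sp)}`, giving `∫ ≥ (2c)^{κ-1} ν(E)^κ`; or `B̄(ξ,r) = Z` and `ν(Z) < 2 ν(E)`,
and then `ν(Z)^κ ≥ 2^κ ν(E)^κ` already exceeds `(2c)^{κ-1} ν(E)^κ`.
-/

lemma ENNReal.rpow_le_rpow_of_nonpos {x y : ℝ≥0∞} {z : ℝ} (h : x ≤ y) (hz : z ≤ 0) :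
    y ^ z ≤ x ^ z := by
  have h' := ENNReal.inv_le_inv.mpr (ENNReal.rpow_le_rpow h (neg_nonneg.mpr hz))
  rwa [← ENNReal.rpow_neg, ← ENNReal.rpow_neg, neg_neg] at h'

lemma ofReal_two_mul_rpow_sub_one_mul_rpow_le {c κ : ℝ} (hc : 1 ≤ c) (hκ : κ ≤ 0)
    {a b : ℝ≥0∞} (ha : a ≠ ⊤) (hb : b < a + a) :
    ENNReal.ofReal ((2 * c) ^ (κ - 1)) * a ^ κ ≤ b ^ κ := by
  calc ENNReal.ofReal ((2 * c) ^ (κ - 1)) * a ^ κ ≤ ENNReal.ofReal (2 ^ κ) * a ^ κ := by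
        gcongr
        calc (2 * c) ^ (κ - 1) ≤ 2 ^ (κ - 1) :=
              Real.rpow_le_rpow_of_nonpos two_pos (by linarith) (by linarith)
          _ ≤ 2 ^ κ := Real.rpow_le_rpow_of_exponent_le one_le_two (by linarith)
    _ = (a + a) ^ κ := by
        rw [← two_mul, ENNReal.mul_rpow_of_ne_top ENNReal.ofNat_ne_top ha,
          ← ENNReal.ofReal_rpow_of_pos two_pos, ENNReal.ofReal_ofNat]
    _ ≤ b ^ κ := ENNReal.rpow_le_rpow_of_nonpos hb.le hκ

section

variable {Z : Type*} [PseudoMetricSpace Z] [MeasurableSpace Z]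

def LowerAhlforsRegular (ν : Measure Z) (D c : ℝ) : Prop :=
  ∀ (z : Z) (r : ℝ), 0 < r → ENNReal.ofReal r < ediam (Set.univ : Set Z) →
    ENNReal.ofReal (c⁻¹ * r ^ D) ≤ ν (ball z r)

lemma LowerAhlforsRegular.closedBall_eq_univ_or_le_measure {ν : Measure Z} {D c r : ℝ}
    (hν : LowerAhlforsRegular ν D c) (z : Z) (hr : 0 < r) :
    closedBall z r = Set.univ ∨ ENNReal.ofReal (c⁻¹ * r ^ D) ≤ ν (closedBall z r) := by
  by_cases hdiam : ENNReal.ofReal r < ediam (Set.univ : Set Z)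
  · exact .inr ((hν z r hr hdiam).trans (measure_mono ball_subset_closedBall))
  · refine .inl (Set.eq_univ_of_forall fun η => ?_)
    rw [mem_closedBall, dist_comm, ← ENNReal.ofReal_le_ofReal_iff hr.le, ← edist_dist]
    exact (edist_le_ediam_of_mem (Set.mem_univ z) (Set.mem_univ η)).trans (not_lt.mp hdiam)

variable [OpensMeasurableSpace Z]

lemma ofReal_rpow_mul_measure_le_setLIntegral (ν : Measure Z) {x ρ : ℝ} (hx : x ≤ 0)
    (hρ : 0 < ρ) (ξ : Z) (E : Set Z) :
    ENNReal.ofReal (ρ ^ x) * ν (closedBall ξ ρ \ E) ≤ ∫⁻ η in Eᶜ, edist ξ η ^ x ∂ν := by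
  calc ENNReal.ofReal (ρ ^ x) * ν (closedBall ξ ρ \ E)
      = ∫⁻ _ in closedBall ξ ρ \ E, ENNReal.ofReal ρ ^ x ∂ν := by
        rw [setLIntegral_const, ENNReal.ofReal_rpow_of_pos hρ]
    _ ≤ ∫⁻ η in closedBall ξ ρ \ E, edist ξ η ^ x ∂ν := by
        refine setLIntegral_mono (measurable_edist_right.pow_const x) fun η hη => ?_
        refine ENNReal.rpow_le_rpow_of_nonpos ?_ hx
        rw [edist_dist, dist_comm]
        exact ENNReal.ofReal_le_ofReal hη.1
    _ ≤ ∫⁻ η in Eᶜ, edist ξ η ^ x ∂ν := lintegral_mono_set (Set.sdiff_subset_compl _ _)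

lemma LowerAhlforsRegular.setLIntegral_edist_rpow_eq_top {ν : Measure Z} {D c α : ℝ}
    (hν : LowerAhlforsRegular ν D c) (hD : 0 ≤ D) (hc : 0 < c) (hα : 0 < α)
    (hdiam : 0 < ediam (Set.univ : Set Z)) {E : Set Z} (hE : ν E = 0) (ξ : Z) :
    ∫⁻ η in Eᶜ, edist ξ η ^ (-(D + α)) ∂ν = ⊤ := by
  have hsmall : ∀ᶠ ρ in 𝓝[>] (0 : ℝ), ENNReal.ofReal ρ < ediam (Set.univ : Set Z) :=
    nhdsWithin_le_nhds <| ENNReal.continuous_ofReal.continuousAt.eventually_lt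
      continuousAt_const (by rwa [ENNReal.ofReal_zero])
  have hbound : ∀ᶠ ρ in 𝓝[>] (0 : ℝ),
      ENNReal.ofReal (c⁻¹ * ρ ^ (-α)) ≤ ∫⁻ η in Eᶜ, edist ξ η ^ (-(D + α)) ∂ν := by
    filter_upwards [hsmall, self_mem_nhdsWithin] with ρ hρdiam (hρ : 0 < ρ)
    calc ENNReal.ofReal (c⁻¹ * ρ ^ (-α))
        = ENNReal.ofReal (ρ ^ (-(D + α))) * ENNReal.ofReal (c⁻¹ * ρ ^ D) := by
          rw [← ENNReal.ofReal_mul (by positivity), mul_left_comm, ← Real.rpow_add hρ]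
          ring_nf
      _ ≤ ENNReal.ofReal (ρ ^ (-(D + α))) * ν (closedBall ξ ρ \ E) := by
          rw [measure_sdiff_null hE]
          gcongr
          exact (hν ξ ρ hρ hρdiam).trans (measure_mono ball_subset_closedBall)
      _ ≤ _ := ofReal_rpow_mul_measure_le_setLIntegral ν (by linarith) hρ ξ E
  have htendsto : Tendsto (fun ρ : ℝ => ENNReal.ofReal (c⁻¹ * ρ ^ (-α))) (𝓝[>] 0) (𝓝 ⊤) :=
    ENNReal.tendsto_ofReal_atTop.comp
      ((tendsto_rpow_neg_nhdsGT_zero (neg_lt_zero.mpr hα)).const_mul_atTop (inv_pos.mpr hc))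
  exact top_le_iff.mp (le_of_tendsto htendsto hbound)

lemma LowerAhlforsRegular.sub_le_setLIntegral_of_measure_ne_zero {ν : Measure Z} {D c α : ℝ}
    (hν : LowerAhlforsRegular ν D c) (hD : 0 < D) (hc : 1 ≤ c) (hα : 0 ≤ α) {E : Set Z}
    (hE0 : ν E ≠ 0) (hE : ν E ≠ ⊤) (ξ : Z) :
    ENNReal.ofReal ((2 * c) ^ (-α / D - 1)) * ν E ^ (-α / D) - ν Set.univ ^ (-α / D) ≤
      ∫⁻ η in Eᶜ, edist ξ η ^ (-(D + α)) ∂ν := by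
  set m := (ν E).toReal
  have hm : 0 < m := ENNReal.toReal_pos hE0 hE
  have hνE : ν E = ENNReal.ofReal m := (ENNReal.ofReal_toReal hE).symm
  have hc0 : 0 < c := zero_lt_one.trans_le hc
  set r := (2 * c * m) ^ D⁻¹
  have hr : 0 < r := by positivity
  have hrD : c⁻¹ * r ^ D = m + m := by
    rw [← Real.rpow_mul (by positivity), inv_mul_cancel₀ hD.ne', Real.rpow_one]
    field_simp
    ring
  have hconst : ENNReal.ofReal (r ^ (-(D + α))) * ν E =
      ENNReal.ofReal ((2 * c) ^ (-α / D - 1)) * ν E ^ (-α / D) := by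
    have hexp : D⁻¹ * -(D + α) = -α / D - 1 := by field_simp; ring
    rw [hνE, ENNReal.ofReal_rpow_of_pos hm, ← ENNReal.ofReal_mul (by positivity),
      ← ENNReal.ofReal_mul (by positivity), ← Real.rpow_mul (by positivity), hexp,
      Real.mul_rpow (by positivity) hm.le, mul_assoc, Real.rpow_sub_one hm.ne',
      div_mul_cancel₀ _ hm.ne']
  have hdichotomy : ν E + ν E ≤ ν (closedBall ξ r) ∨ ν Set.univ < ν E + ν E := by
    rcases hν.closedBall_eq_univ_or_le_measure ξ hr with huniv | hball
    · rw [huniv]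
      exact le_or_gt _ _
    · left
      rwa [hνE, ← ENNReal.ofReal_add hm.le hm.le, ← hrD]
  rcases hdichotomy with hball | hlarge
  · calc _ ≤ ENNReal.ofReal ((2 * c) ^ (-α / D - 1)) * ν E ^ (-α / D) := tsub_le_self
      _ = ENNReal.ofReal (r ^ (-(D + α))) * ν E := hconst.symm
      _ ≤ ENNReal.ofReal (r ^ (-(D + α))) * ν (closedBall ξ r \ E) :=
          mul_le_mul_right ((ENNReal.le_sub_of_add_le_left hE hball).trans le_measure_sdiff) _
      _ ≤ _ := ofReal_rpow_mul_measure_le_setLIntegral ν (by linarith) hr ξ E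
  · refine (tsub_eq_zero_of_le ?_).trans_le zero_le
    exact ofReal_two_mul_rpow_sub_one_mul_rpow_le hc
      (div_nonpos_of_nonpos_of_nonneg (neg_nonpos.mpr hα) hD.le) hE hlarge

end

theorem tail_integral_lower_bound_general
    {Z : Type*} [MetricSpace Z] [MeasurableSpace Z] [BorelSpace Z]
    (hperf : ∀ z : Z, (nhdsWithin z {z}ᶜ).NeBot)
    (ν : Measure Z) (D c : ℝ) (hD : 0 < D) (hc : 1 ≤ c)
    (hA : ∀ (z : Z) (r : ℝ), 0 < r → ENNReal.ofReal r < EMetric.diam (Set.univ : Set Z) →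
      ENNReal.ofReal (c⁻¹ * r ^ D) ≤ ν (Metric.ball z r) ∧
        ν (Metric.ball z r) ≤ ENNReal.ofReal (c * r ^ D))
    (s p : ℝ) (hs : 0 < s) (hp : 1 ≤ p) :
    ∃ C : ℝ, 0 < C ∧
      ∀ E : Set Z, MeasurableSet E → ν E < ⊤ → ∀ ξ : Z,
        ENNReal.ofReal C * (ν E) ^ (-(s * p) / D) - (ν Set.univ) ^ (-(s * p) / D) ≤
          ∫⁻ η in Eᶜ, (edist ξ η) ^ (-(D + s * p)) ∂ν := by
  have hν : LowerAhlforsRegular ν D c := fun z r hr hdiam => (hA z r hr hdiam).1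
  have hsp : 0 < s * p := mul_pos hs (zero_lt_one.trans_le hp)
  refine ⟨(2 * c) ^ (-(s * p) / D - 1), by positivity, fun E _ hE ξ => ?_⟩
  rcases eq_or_ne (ν E) 0 with hE0 | hE0
  · have hdiam : 0 < ediam (Set.univ : Set Z) := by
      obtain ⟨η, hη⟩ := (hperf ξ).nonempty_of_mem self_mem_nhdsWithin
      exact ediam_pos_iff'.mpr ⟨ξ, trivial, η, trivial, fun h => hη h.symm⟩
    rw [hν.setLIntegral_edist_rpow_eq_top hD.le (by linarith) hsp hdiam hE0]
    exact le_top
  · exact hν.sub_le_setLIntegral_of_measure_ne_zero hD hc hsp.le hE0 hE.ne ξ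

/-- **Lower bound for the tail integral (analogue of Lemma 6.1 of the Hitchhiker's guide).**
Let `(Z,d,ν)` be an Ahlfors `D`-regular metric measure space with constant `c ≥ 1`,
`s ∈ (0,1)`, `p ≥ 1`. Then there is `C > 0` depending only on `c, D, s·p` such that for
every measurable `E ⊆ Z` with `ν E < ∞` and every `ξ ∈ Z`,
`∫_{Z∖E} d(ξ,η)^{−(D+sp)} dν(η) ≥ C·ν(E)^{−sp/D} − ν(Z)^{−sp/D}`
(in `ℝ≥0∞`, with truncated subtraction; `ν(Z)^{−sp/D} = 0` when `ν Z = ∞`). -/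
theorem tail_integral_lower_bound
    {Z : Type*} [MetricSpace Z] [CompleteSpace Z] [MeasurableSpace Z] [BorelSpace Z]
    (hperf : ∀ z : Z, (nhdsWithin z {z}ᶜ).NeBot)
    (ν : Measure Z) (D c : ℝ) (hD : 0 < D) (hc : 1 ≤ c)
    (hA : ∀ (z : Z) (r : ℝ), 0 < r → ENNReal.ofReal r < EMetric.diam (Set.univ : Set Z) →
      ENNReal.ofReal (c⁻¹ * r ^ D) ≤ ν (Metric.ball z r) ∧
        ν (Metric.ball z r) ≤ ENNReal.ofReal (c * r ^ D))
    (s p : ℝ) (hs : 0 < s) (hs1 : s < 1) (hp : 1 ≤ p) :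
    ∃ C : ℝ, 0 < C ∧
      ∀ E : Set Z, MeasurableSet E → ν E < ⊤ → ∀ ξ : Z,
        ENNReal.ofReal C * (ν E) ^ (-(s * p) / D) - (ν Set.univ) ^ (-(s * p) / D) ≤
          ∫⁻ η in Eᶜ, (edist ξ η) ^ (-(D + s * p)) ∂ν :=
  tail_integral_lower_bound_general hperf ν D c hD hc hA s p hs hp
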